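/- Let (θ, ω) be a solution of the inertial frustrated Kuramoto model with all weights satisfying 0 ≤ ψ_{ij} ≤ ψ_u and with sufficient differentiability (a_i = ω_i', b_i = a_i', b_i' exist), and let c > 2, η = 1 − 2/c. Let D^∞ > 0 and let I be an open interval of times on which D_θ(t) ≤ D^∞, and let χ be a permutation of {1,…,N} such that b_{χ(1)}(t) ≤ … ≤ b_{χ(N)}(t) for all t ∈ I; define B(t) = (Σ_{i=1}^N c^{i−1}·b_{χ(i)}(t) − Σ_{i=1}^N c^{N−i}·b_{χ(i)}(t))/S_c, A(t) = Y_c(a(t)), F(t) = Y_c(ω(t)). Then for every t ∈ I: m·B'(t) + B(t) ≤ (2K·ψ_u/η)·A(t) + (2K·ψ_u·(D^∞·cos α + sin α)/η²)·F(t)². -/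

import Mathlib

/-!
Differentiating the equation of motion twice gives
`m b_i' + b_i = (K/N) Σ_j ψ_ij (cos(θ_j - θ_i + α) (a_j - a_i) - sin(θ_j - θ_i + α) (ω_j - ω_i)²)`,
and `|sin (x + α)| ≤ |x| cos α + sin α` bounds its modulus by
`K ψ_u (D(a) + (D^∞ cos α + sin α) D(ω)²)`, where `D` is the diameter.
As `χ` is fixed, `m B' + B` is the same weighted combination of the `m b_i' + b_i`, and each of its
two weight vectors sums to `S_c`, so it is at most twice that bound.
Finally `η D(z) ≤ Y_c(z)`: pairing index `i` with `N - 1 - i` in the sorted vector gives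
`S_c Y_c(z) ≥ (c^(N-1) - 1) D(z)`, and `(c^(N-1) - 1) / S_c ≥ 1 - 2/c` because `S_c (c - 1) = c^N - 1`.
-/

open Real Finset

/-- Diameter: max minus min of a finite family of reals. -/
noncomputable def diam {N : ℕ} (v : Fin N → ℝ) : ℝ := (⨆ i, v i) - (⨅ i, v i)

/-- `S_c = Σ_{n=0}^{N-1} c^n`. -/
noncomputable def Sc (N : ℕ) (c : ℝ) : ℝ := ∑ n ∈ Finset.range N, c ^ n

/-- `Y_c(z)`: difference of the two convex-type combinations of the nondecreasing
rearrangement of `z` (weights `c^{i-1}` and `c^{N-i}`), divided by `S_c`. -/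
noncomputable def Yc {N : ℕ} (c : ℝ) (z : Fin N → ℝ) : ℝ :=
  (∑ i : Fin N, c ^ (i : ℕ) * z (Tuple.sort z i) -
   ∑ i : Fin N, c ^ (N - 1 - (i : ℕ)) * z (Tuple.sort z i)) / Sc N c

/-- Difference of the two convex combinations, along a fixed permutation, of a family of
time-dependent quantities. -/
noncomputable def comb {N : ℕ} (c : ℝ) (σ : Equiv.Perm (Fin N)) (g : Fin N → ℝ → ℝ) :
    ℝ → ℝ :=
  fun t => (∑ i : Fin N, c ^ (i : ℕ) * g (σ i) t
    - ∑ i : Fin N, c ^ (N - 1 - (i : ℕ)) * g (σ i) t) / Sc N c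

section WeightGap

variable {N : ℕ}

def weightGap (c : ℝ) (w : Fin N → ℝ) : ℝ :=
  ∑ i : Fin N, (c ^ (i : ℕ) - c ^ (N - 1 - (i : ℕ))) * w i

theorem Yc_eq_weightGap (c : ℝ) (z : Fin N → ℝ) :
    Yc c z = weightGap c (z ∘ Tuple.sort z) / Sc N c := by
  simp only [Yc, weightGap, ← sum_sub_distrib, sub_mul, Function.comp]

theorem comb_eq_weightGap (c : ℝ) (σ : Equiv.Perm (Fin N)) (g : Fin N → ℝ → ℝ) (t : ℝ) :
    comb c σ g t = weightGap c (fun i => g (σ i) t) / Sc N c := by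
  simp only [comb, weightGap, ← sum_sub_distrib, sub_mul]

theorem sum_pow_eq_Sc (c : ℝ) : ∑ i : Fin N, c ^ (i : ℕ) = Sc N c :=
  Fin.sum_univ_eq_sum_range _ N

theorem sum_pow_rev_eq_Sc (c : ℝ) : ∑ i : Fin N, c ^ (N - 1 - (i : ℕ)) = Sc N c := by
  rw [← sum_pow_eq_Sc, ← Equiv.sum_comp Fin.revPerm]
  refine sum_congr rfl fun i _ => ?_
  simp only [Fin.revPerm_apply, Fin.val_rev]
  congr 1
  omega

theorem Sc_pos (hN : 0 < N) {c : ℝ} (hc : 0 < c) : 0 < Sc N c :=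
  sum_pos (fun n _ => pow_pos hc n) (nonempty_range_iff.2 hN.ne')

theorem weightGap_le_of_abs_le {c M : ℝ} (hc : 0 ≤ c) {w : Fin N → ℝ} (hw : ∀ i, |w i| ≤ M) :
    weightGap c w ≤ 2 * Sc N c * M := by
  calc weightGap c w ≤ ∑ i : Fin N, (c ^ (i : ℕ) + c ^ (N - 1 - (i : ℕ))) * M := by
        refine sum_le_sum fun i _ => ?_
        have ha := pow_nonneg hc (i : ℕ)
        have hb := pow_nonneg hc (N - 1 - (i : ℕ))
        obtain ⟨hlo, hhi⟩ := abs_le.mp (hw i)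
        nlinarith [mul_nonneg ha (sub_nonneg.2 hhi), mul_nonneg hb (neg_le_iff_add_nonneg.1 hlo)]
    _ = 2 * Sc N c * M := by
        rw [← sum_mul, sum_add_distrib, sum_pow_eq_Sc, sum_pow_rev_eq_Sc]; ring

theorem two_mul_weightGap (c : ℝ) (w : Fin N → ℝ) :
    2 * weightGap c w =
      ∑ i : Fin N, (c ^ (i : ℕ) - c ^ (N - 1 - (i : ℕ))) * (w i - w i.rev) := by
  have hrev : weightGap c w = ∑ i : Fin N, (c ^ (N - 1 - (i : ℕ)) - c ^ (i : ℕ)) * w i.rev := by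
    rw [weightGap, ← Equiv.sum_comp Fin.revPerm]
    refine sum_congr rfl fun i _ => ?_
    simp only [Fin.revPerm_apply, Fin.val_rev]
    congr 3 <;> omega
  rw [two_mul]
  nth_rewrite 2 [hrev]
  rw [weightGap, ← sum_add_distrib]
  exact sum_congr rfl fun i _ => by ring

theorem weightGap_ge_of_monotone [NeZero N] {c : ℝ} (hc : 1 ≤ c) {w : Fin N → ℝ}
    (hw : Monotone w) : (c ^ (N - 1) - 1) * (w (Fin.rev 0) - w 0) ≤ weightGap c w := by
  set f : Fin N → ℝ := fun i => (c ^ (i : ℕ) - c ^ (N - 1 - (i : ℕ))) * (w i - w i.rev)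
  have hf : ∀ i ∈ univ, 0 ≤ f i := by
    intro i _
    rcases le_total (i : ℕ) (N - 1 - (i : ℕ)) with h | h
    · refine mul_nonneg_of_nonpos_of_nonpos (sub_nonpos.2 (pow_le_pow_right₀ hc h))
        (sub_nonpos.2 (hw ?_))
      rw [Fin.le_def, Fin.val_rev]; omega
    · refine mul_nonneg (sub_nonneg.2 (pow_le_pow_right₀ hc h)) (sub_nonneg.2 (hw ?_))
      rw [Fin.le_def, Fin.val_rev]; omega
  have hsum : 2 * weightGap c w = ∑ i, f i := two_mul_weightGap c w
  by_cases h0 : (0 : Fin N) = Fin.rev 0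
  · rw [← h0, sub_self, mul_zero]
    linarith [sum_nonneg hf]
  · have hpair := add_le_sum hf (mem_univ _) (mem_univ _) h0
    simp only [f, Fin.val_zero, Fin.val_rev, Fin.rev_rev, zero_add, Nat.sub_zero, Nat.sub_self,
      pow_zero] at hpair
    linarith

theorem one_sub_two_div_mul_Sc_le (hN : 2 ≤ N) {c : ℝ} (hc : 2 < c) :
    (1 - 2 / c) * Sc N c ≤ c ^ (N - 1) - 1 := by
  have hc0 : 0 < c := by linarith
  have hgeom : Sc N c * (c - 1) = c ^ N - 1 := geom_sum_mul c N
  have hpow : c * c ^ (N - 1) = c ^ N := by rw [← pow_succ']; congr 1; omega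
  have hSc : 1 + c ≤ Sc N c := by
    have := sum_le_sum_of_subset_of_nonneg (range_subset_range.2 hN)
      (fun n _ _ => (pow_pos hc0 n).le) (f := fun n => c ^ n)
    simpa [Sc, sum_range_succ] using this
  rw [← sub_nonneg]
  have key : c * ((c ^ (N - 1) - 1) - (1 - 2 / c) * Sc N c) = Sc N c - (c - 1) := by
    have h2c : c * (2 / c) = 2 := mul_div_cancel₀ 2 hc0.ne'
    linear_combination hpow + Sc N c * h2c - hgeom
  nlinarith

end WeightGap

section Diam

variable {N : ℕ}

theorem sub_le_diam (v : Fin N → ℝ) (j k : Fin N) : v j - v k ≤ diam v :=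
  sub_le_sub (le_ciSup (Set.finite_range v).bddAbove j) (ciInf_le (Set.finite_range v).bddBelow k)

theorem abs_sub_le_diam (v : Fin N → ℝ) (j k : Fin N) : |v j - v k| ≤ diam v :=
  abs_sub_le_iff.2 ⟨sub_le_diam v j k, sub_le_diam v k j⟩

theorem diam_nonneg [NeZero N] (v : Fin N → ℝ) : 0 ≤ diam v := by
  simpa using sub_le_diam v 0 0

theorem Fin.le_rev_zero [NeZero N] (i : Fin N) : i ≤ Fin.rev 0 := by
  simpa using Fin.rev_le_rev.2 (Fin.zero_le i.rev)

theorem diam_le_of_monotone_comp [NeZero N] {z : Fin N → ℝ} {σ : Equiv.Perm (Fin N)}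
    (hz : Monotone (z ∘ σ)) : diam z ≤ z (σ (Fin.rev 0)) - z (σ 0) := by
  refine sub_le_sub (ciSup_le fun j => ?_) (le_ciInf fun j => ?_)
  · simpa using hz (Fin.le_rev_zero (σ.symm j))
  · simpa using hz (Fin.zero_le (σ.symm j))

theorem one_sub_two_div_mul_diam_le_Yc (hN : 2 ≤ N) {c : ℝ} (hc : 2 < c) (z : Fin N → ℝ) :
    (1 - 2 / c) * diam z ≤ Yc c z := by
  have : NeZero N := ⟨by omega⟩
  have hc0 : 0 < c := by linarith
  have hS : 0 < Sc N c := Sc_pos (by omega) hc0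
  set w := z ∘ Tuple.sort z
  have hw : Monotone w := Tuple.monotone_sort z
  have hη : 0 ≤ 1 - 2 / c := sub_nonneg.2 ((div_le_one hc0).2 hc.le)
  have hspread : 0 ≤ w (Fin.rev 0) - w 0 := sub_nonneg.2 (hw (Fin.zero_le _))
  rw [Yc_eq_weightGap, le_div_iff₀ hS]
  calc (1 - 2 / c) * diam z * Sc N c ≤ (1 - 2 / c) * Sc N c * (w (Fin.rev 0) - w 0) := by
        rw [mul_right_comm]
        exact mul_le_mul_of_nonneg_left (diam_le_of_monotone_comp hw) (mul_nonneg hη hS.le)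
    _ ≤ (c ^ (N - 1) - 1) * (w (Fin.rev 0) - w 0) :=
        mul_le_mul_of_nonneg_right (one_sub_two_div_mul_Sc_le hN hc) hspread
    _ ≤ weightGap c w := weightGap_ge_of_monotone (by linarith) hw

end Diam

theorem abs_sin_add_le {x α D : ℝ} (hx : |x| ≤ D) (hα0 : 0 ≤ α) (hα : α ≤ π / 2) :
    |sin (x + α)| ≤ D * cos α + sin α := by
  have hcos : 0 ≤ cos α := cos_nonneg_of_mem_Icc ⟨by linarith [pi_pos], hα⟩
  have hsin : 0 ≤ sin α := sin_nonneg_of_nonneg_of_le_pi hα0 (by linarith [pi_pos])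
  calc |sin (x + α)| ≤ |sin x| * cos α + |cos x| * sin α := by
        rw [sin_add]
        refine (abs_add_le _ _).trans_eq ?_
        rw [abs_mul, abs_mul, abs_of_nonneg hcos, abs_of_nonneg hsin]
    _ ≤ D * cos α + 1 * sin α := by
        gcongr
        exacts [abs_sin_le_abs.trans hx, abs_cos_le_one x]
    _ = D * cos α + sin α := by rw [one_mul]

theorem Set.EqOn.eqOn_of_hasDerivAt {f g f' g' : ℝ → ℝ} {s : Set ℝ} (h : Set.EqOn f g s)
    (hs : IsOpen s) (hf : ∀ t, HasDerivAt f (f' t) t) (hg : ∀ t, HasDerivAt g (g' t) t) :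
    Set.EqOn f' g' s := fun t ht =>
  (hf t).unique ((hg t).congr_of_eventuallyEq (h.eventuallyEq_of_mem (hs.mem_nhds ht)))

theorem ContDiff.differentiable_iterate_deriv {f : ℝ → ℝ} {n : WithTop ℕ∞} (hf : ContDiff ℝ n f)
    {k : ℕ} (hk : k < n) : Differentiable ℝ (deriv^[k] f) :=
  iteratedDeriv_eq_iterate (f := f) ▸ hf.differentiable_iteratedDeriv k hk

section Kuramoto

variable {N : ℕ} (m K α : ℝ) (Ω : Fin N → ℝ) (ψ : Fin N → Fin N → ℝ) {θ : Fin N → ℝ → ℝ}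

theorem kuramoto_jerk_eq (hθ : ∀ i, ContDiff ℝ 4 (θ i))
    (hode : ∀ i, ∀ t : ℝ, 0 ≤ t →
      m * deriv (deriv (θ i)) t + deriv (θ i) t =
        Ω i + (K / N) * ∑ j : Fin N, ψ i j * sin (θ j t - θ i t + α))
    (i : Fin N) {t : ℝ} (ht : 0 < t) :
    m * deriv (deriv (deriv (deriv (θ i)))) t + deriv (deriv (deriv (θ i))) t =
      (K / N) * ∑ j : Fin N, ψ i j * (cos (θ j t - θ i t + α) *
        (deriv (deriv (θ j)) t - deriv (deriv (θ i)) t)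
          - sin (θ j t - θ i t + α) * (deriv (θ j) t - deriv (θ i) t) ^ 2) := by
  have hd0 : ∀ j, Differentiable ℝ (θ j) := fun j => (hθ j).differentiable (by norm_num)
  have hd1 : ∀ j, Differentiable ℝ (deriv (θ j)) := fun j =>
    (hθ j).differentiable_iterate_deriv (k := 1) (by norm_num)
  have hd2 : ∀ j, Differentiable ℝ (deriv (deriv (θ j))) := fun j =>
    (hθ j).differentiable_iterate_deriv (k := 2) (by norm_num)
  have hd3 : ∀ j, Differentiable ℝ (deriv (deriv (deriv (θ j)))) := fun j =>
    (hθ j).differentiable_iterate_deriv (k := 3) (by norm_num)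
  have hphase : ∀ j t, HasDerivAt (fun s => θ j s - θ i s + α)
      (deriv (θ j) t - deriv (θ i) t) t := fun j t =>
    ((hd0 j t).hasDerivAt.sub (hd0 i t).hasDerivAt).add_const α
  have h0 : Set.EqOn (fun s => m * deriv (deriv (θ i)) s + deriv (θ i) s)
      (fun s => Ω i + (K / N) * ∑ j : Fin N, ψ i j * sin (θ j s - θ i s + α)) (Set.Ioi 0) :=
    fun s hs => hode i s (le_of_lt hs)
  have h1 := h0.eqOn_of_hasDerivAt isOpen_Ioi
    (fun t => ((hd2 i t).hasDerivAt.const_mul m).add (hd1 i t).hasDerivAt)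
    (fun t => ((HasDerivAt.fun_sum fun j _ => ((hphase j t).sin.const_mul (ψ i j))).const_mul
      (K / N)).const_add (Ω i))
  have h2 := h1.eqOn_of_hasDerivAt isOpen_Ioi
    (fun t => ((hd3 i t).hasDerivAt.const_mul m).add (hd2 i t).hasDerivAt)
    (fun t => (HasDerivAt.fun_sum fun j _ => (((hphase j t).cos.mul
      ((hd1 j t).hasDerivAt.sub (hd1 i t).hasDerivAt)).const_mul
        (ψ i j))).const_mul (K / N))
  refine (h2 ht).trans ?_
  simp only [Pi.sub_apply]
  congr 1
  exact sum_congr rfl fun j _ => by ring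

theorem abs_kuramoto_jerk_le (ψu D : ℝ) (hK : 0 ≤ K) (hα0 : 0 ≤ α) (hα : α ≤ π / 2)
    (hψ : ∀ i j, 0 ≤ ψ i j ∧ ψ i j ≤ ψu) (hθ : ∀ i, ContDiff ℝ 4 (θ i))
    (hode : ∀ i, ∀ t : ℝ, 0 ≤ t →
      m * deriv (deriv (θ i)) t + deriv (θ i) t =
        Ω i + (K / N) * ∑ j : Fin N, ψ i j * sin (θ j t - θ i t + α))
    (i : Fin N) {t : ℝ} (ht : 0 < t) (hdiam : diam (fun j => θ j t) ≤ D) :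
    |m * deriv (deriv (deriv (deriv (θ i)))) t + deriv (deriv (deriv (θ i))) t| ≤
      K * (ψu * (diam (fun j => deriv (deriv (θ j)) t)
        + (D * cos α + sin α) * diam (fun j => deriv (θ j) t) ^ 2)) := by
  set Da := diam (fun j => deriv (deriv (θ j)) t)
  set Dω := diam (fun j => deriv (θ j) t)
  set β := D * cos α + sin α
  have hterm : ∀ j, |ψ i j * (cos (θ j t - θ i t + α) *
      (deriv (deriv (θ j)) t - deriv (deriv (θ i)) t)
        - sin (θ j t - θ i t + α) * (deriv (θ j) t - deriv (θ i) t) ^ 2)| ≤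
      ψu * (Da + β * Dω ^ 2) := by
    intro j
    have hsin : |sin (θ j t - θ i t + α)| ≤ β :=
      abs_sin_add_le ((abs_sub_le_diam (fun j => θ j t) j i).trans hdiam) hα0 hα
    have hβ : 0 ≤ β := (abs_nonneg _).trans hsin
    have hv : |deriv (deriv (θ j)) t - deriv (deriv (θ i)) t| ≤ Da :=
      abs_sub_le_diam (fun j => deriv (deriv (θ j)) t) j i
    have hu : |deriv (θ j) t - deriv (θ i) t| ≤ Dω := abs_sub_le_diam (fun j => deriv (θ j) t) j i
    rw [abs_mul, abs_of_nonneg (hψ i j).1]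
    refine mul_le_mul (hψ i j).2 ?_ (abs_nonneg _) ((hψ i j).1.trans (hψ i j).2)
    calc _ ≤ |cos (θ j t - θ i t + α)| * |deriv (deriv (θ j)) t - deriv (deriv (θ i)) t|
          + |sin (θ j t - θ i t + α)| * |deriv (θ j) t - deriv (θ i) t| ^ 2 := by
          refine (abs_sub _ _).trans_eq ?_
          rw [abs_mul, abs_mul, abs_pow]
      _ ≤ 1 * Da + β * Dω ^ 2 := by
          gcongr
          exact abs_cos_le_one _
      _ = Da + β * Dω ^ 2 := by rw [one_mul]
  have hN : (0 : ℝ) < N := by exact_mod_cast i.pos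
  rw [kuramoto_jerk_eq m K α Ω ψ hθ hode i ht, abs_mul, abs_of_nonneg (by positivity)]
  calc K / N * |∑ j : Fin N, _| ≤ K / N * ∑ _j : Fin N, ψu * (Da + β * Dω ^ 2) := by
        gcongr
        exact (abs_sum_le_sum_abs _ _).trans (sum_le_sum fun j _ => hterm j)
    _ = K * (ψu * (Da + β * Dω ^ 2)) := by
        rw [sum_const, card_univ, Fintype.card_fin, nsmul_eq_mul]
        field_simp

end Kuramoto

theorem mul_deriv_comb_add_comb {N : ℕ} (c m : ℝ) (σ : Equiv.Perm (Fin N))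
    {g : Fin N → ℝ → ℝ} {t : ℝ} (hg : ∀ i, DifferentiableAt ℝ (g i) t) :
    m * deriv (comb c σ g) t + comb c σ g t =
      comb c σ (fun i s => m * deriv (g i) s + g i s) t := by
  have hderiv : HasDerivAt (comb c σ g) (comb c σ (fun i => deriv (g i)) t) t :=
    ((HasDerivAt.fun_sum fun i _ => (hg (σ i)).hasDerivAt.const_mul _).sub
      (HasDerivAt.fun_sum fun i _ => (hg (σ i)).hasDerivAt.const_mul _)).div_const _
  rw [hderiv.deriv, comb_eq_weightGap, comb_eq_weightGap, comb_eq_weightGap, ← mul_div_assoc,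
    ← add_div, weightGap, weightGap, weightGap, mul_sum, ← sum_add_distrib]
  exact congrArg (· / Sc N c) (sum_congr rfl fun i _ => by ring)

theorem stmt16_general {N : ℕ} (hN : 2 ≤ N) (m K α ψu : ℝ) (hK : 0 < K)
    (hα0 : 0 < α) (hα : α < π / 2)
    (Ω : Fin N → ℝ) (ψ : Fin N → Fin N → ℝ)
    (hψ : ∀ i j, 0 ≤ ψ i j ∧ ψ i j ≤ ψu)
    (θ : Fin N → ℝ → ℝ) (hsmooth : ∀ i, ContDiff ℝ 4 (θ i))
    (hode : ∀ i, ∀ t : ℝ, 0 ≤ t →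
      m * deriv (deriv (θ i)) t + deriv (θ i) t =
        Ω i + (K / N) * ∑ j : Fin N, ψ i j * Real.sin (θ j t - θ i t + α))
    (c η : ℝ) (hc : 2 < c) (hη : η = 1 - 2 / c)
    (Dinf : ℝ)
    (t1 t2 : ℝ) (ht1 : 0 ≤ t1)
    (hdiam : ∀ t ∈ Set.Ioo t1 t2, diam (fun i => θ i t) ≤ Dinf)
    (χ : Equiv.Perm (Fin N)) :
    ∀ t ∈ Set.Ioo t1 t2,
      m * deriv (comb c χ (fun i => deriv (deriv (deriv (θ i))))) t
          + comb c χ (fun i => deriv (deriv (deriv (θ i)))) t ≤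
        (2 * K * ψu / η) * Yc c (fun i => deriv (deriv (θ i)) t)
          + (2 * K * ψu * (Dinf * Real.cos α + Real.sin α) / η ^ 2)
            * (Yc c (fun i => deriv (θ i) t)) ^ 2 := by
  intro t ht
  have : NeZero N := ⟨by omega⟩
  have hη0 : 0 < η := by rw [hη, sub_pos, div_lt_one (by linarith)]; linarith
  have hψu : 0 ≤ ψu := (hψ 0 0).1.trans (hψ 0 0).2
  have hD : 0 ≤ Dinf := (diam_nonneg _).trans (hdiam t ht)
  have hβ : 0 ≤ Dinf * cos α + sin α :=
    (abs_nonneg _).trans (abs_sin_add_le (x := 0) (by simpa using hD) hα0.le hα.le)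
  have hjerk := fun i => abs_kuramoto_jerk_le m K α Ω ψ ψu Dinf hK.le hα0.le hα.le hψ hsmooth
    hode i (ht1.trans_lt ht.1) (hdiam t ht)
  have hDa := (le_div_iff₀' hη0).2 (hη ▸ one_sub_two_div_mul_diam_le_Yc hN hc
    (fun i => deriv (deriv (θ i)) t))
  have hDω := (le_div_iff₀' hη0).2 (hη ▸ one_sub_two_div_mul_diam_le_Yc hN hc
    (fun i => deriv (θ i) t))
  have hS : 0 < Sc N c := Sc_pos (by omega) (by linarith)
  have hb : ∀ i, DifferentiableAt ℝ (deriv (deriv (deriv (θ i)))) t := fun i =>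
    ((hsmooth i).differentiable_iterate_deriv (k := 3) (by norm_num)).differentiableAt
  rw [mul_deriv_comb_add_comb c m χ hb, comb_eq_weightGap, div_le_iff₀ hS]
  calc _ ≤ 2 * Sc N c * (K * (ψu * (diam (fun j => deriv (deriv (θ j)) t)
        + (Dinf * cos α + sin α) * diam (fun j => deriv (θ j) t) ^ 2))) :=
        weightGap_le_of_abs_le (by linarith) fun i => hjerk (χ i)
    _ ≤ 2 * Sc N c * (K * (ψu * (Yc c (fun i => deriv (deriv (θ i)) t) / η
        + (Dinf * cos α + sin α) * (Yc c (fun i => deriv (θ i) t) / η) ^ 2))) := by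
        gcongr
        exact diam_nonneg _
    _ = _ := by field_simp

/-- first-order differential inequality for the jerk combination `B`. -/
theorem stmt16 {N : ℕ} (hN : 2 ≤ N) (m K α ψu : ℝ) (hm : 0 < m) (hK : 0 < K)
    (hα0 : 0 < α) (hα : α < π / 2)
    (Ω : Fin N → ℝ) (ψ : Fin N → Fin N → ℝ)
    (hψ : ∀ i j, 0 ≤ ψ i j ∧ ψ i j ≤ ψu)
    (θ : Fin N → ℝ → ℝ) (hsmooth : ∀ i, ContDiff ℝ 4 (θ i))
    (hode : ∀ i, ∀ t : ℝ, 0 ≤ t →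
      m * deriv (deriv (θ i)) t + deriv (θ i) t =
        Ω i + (K / N) * ∑ j : Fin N, ψ i j * Real.sin (θ j t - θ i t + α))
    (c η : ℝ) (hc : 2 < c) (hη : η = 1 - 2 / c)
    (Dinf : ℝ) (hD : 0 < Dinf)
    (t1 t2 : ℝ) (ht1 : 0 ≤ t1)
    (hdiam : ∀ t ∈ Set.Ioo t1 t2, diam (fun i => θ i t) ≤ Dinf)
    (χ : Equiv.Perm (Fin N))
    (hord : ∀ t ∈ Set.Ioo t1 t2,
      Monotone fun i => deriv (deriv (deriv (θ (χ i)))) t) :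
    ∀ t ∈ Set.Ioo t1 t2,
      m * deriv (comb c χ (fun i => deriv (deriv (deriv (θ i))))) t
          + comb c χ (fun i => deriv (deriv (deriv (θ i)))) t ≤
        (2 * K * ψu / η) * Yc c (fun i => deriv (deriv (θ i)) t)
          + (2 * K * ψu * (Dinf * Real.cos α + Real.sin α) / η ^ 2)
            * (Yc c (fun i => deriv (θ i) t)) ^ 2 :=
  stmt16_general hN m K α ψu hK hα0 hα Ω ψ hψ θ hsmooth hode c η hc hη Dinf t1 t2 ht1 hdiam χ
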